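/- Under Assumption 1, let W₁ and W₂ be independent standard normal random variables and W = (W₁,W₂). Then E[‖α·f(W)‖₂] < ∞ and E[‖B + b(W)‖] < ∞ (operator/Frobenius norm), and for every x = (x₁,x₂) with x₁,x₂ ≥ 0, E[‖F(x,W)‖₂] ≤ φ·‖x‖₂ + c, where φ = E[‖B + b(W)‖] and c = ‖ω‖₂ + E[‖α·f(W)‖₂]. -/

import Mathlib

open Matrix MeasureTheory ProbabilityTheory

/-- Euclidean (`L²`) norm on `ℝ²`. -/
noncomputable def euclNorm2 (y : Fin 2 → ℝ) : ℝ := ‖(WithLp.equiv 2 (Fin 2 → ℝ)).symm y‖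

/-- Frobenius norm of a 2×2 real matrix. -/
noncomputable def frobNorm2 (M : Matrix (Fin 2) (Fin 2) ℝ) : ℝ :=
  Real.sqrt (∑ i, ∑ j, (M i j) ^ 2)

/-- One-step GARCH-2F variance map
`F(x,W) = ω + β·x + α·((W₁ − γ₁√x₁)², (W₂ − γ₂√x₂)²)ᵀ`. -/
noncomputable def garchF (ω : Fin 2 → ℝ) (β α : Matrix (Fin 2) (Fin 2) ℝ) (γ : Fin 2 → ℝ)
    (x W : Fin 2 → ℝ) : Fin 2 → ℝ :=
  ω + β.mulVec x +
    α.mulVec ![(W 0 - γ 0 * Real.sqrt (x 0)) ^ 2, (W 1 - γ 1 * Real.sqrt (x 1)) ^ 2]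

/-- Autoregressive matrix `B`. -/
def garchB (β α : Matrix (Fin 2) (Fin 2) ℝ) (γ : Fin 2 → ℝ) : Matrix (Fin 2) (Fin 2) ℝ :=
  !![β 0 0 + α 0 0 * γ 0 ^ 2, β 0 1 + α 0 1 * γ 1 ^ 2;
     β 1 0 + α 1 0 * γ 0 ^ 2, β 1 1 + α 1 1 * γ 1 ^ 2]

/-- The random matrix `b(W)`. -/
noncomputable def garchb (α : Matrix (Fin 2) (Fin 2) ℝ) (γ W : Fin 2 → ℝ) :
    Matrix (Fin 2) (Fin 2) ℝ :=
  !![α 0 0 * W 0 ^ 2 * (if γ 0 * W 0 < 0 then 1 else 0),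
     α 0 1 * W 1 ^ 2 * (if γ 1 * W 1 < 0 then 1 else 0);
     α 1 0 * W 0 ^ 2 * (if γ 0 * W 0 < 0 then 1 else 0),
     α 1 1 * W 1 ^ 2 * (if γ 1 * W 1 < 0 then 1 else 0)]

/-- The random vector `f(W)`. -/
noncomputable def garchf (γ W : Fin 2 → ℝ) : Fin 2 → ℝ :=
  ![(|γ 0| + Real.sqrt (γ 0 ^ 2 + W 0 ^ 2)) ^ 2,
    (|γ 1| + Real.sqrt (γ 1 ^ 2 + W 1 ^ 2)) ^ 2]

/-!
Write `B + b(W) = β + α · diag d(W)` with `d_j(W) = γ_j² + W_j² 1{γ_j W_j < 0}`. Expanding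
`(W_j − γ_j √x_j)²` and bounding the cross term by AM-GM when `γ_j W_j < 0` gives
`(W_j − γ_j √x_j)² ≤ d_j(W) x_j + f_j(W)`, so for `x ≥ 0` we have, componentwise,
`0 ≤ F(x, W) − ω ≤ (B + b(W)) x + α f(W)`. Monotonicity of the Euclidean norm on nonnegative
vectors, the triangle inequality and `‖M v‖₂ ≤ ‖M‖_F ‖v‖₂` give the pointwise bound
`‖F(x, W)‖₂ ≤ ‖B + b(W)‖_F ‖x‖₂ + ‖ω‖₂ + ‖α f(W)‖₂`, which is then integrated. Both random norms
are dominated by affine functions of `W₁² + W₂²`, integrable because Gaussians have second moments.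
-/

open WithLp
open scoped Matrix.Norms.Frobenius

section Norms

variable {ι : Type*} [Fintype ι]

lemma norm_toLp_two_le_of_nonneg_of_le {u v : ι → ℝ} (hu : 0 ≤ u) (huv : u ≤ v) :
    ‖toLp 2 u‖ ≤ ‖toLp 2 v‖ := by
  simp only [EuclideanSpace.norm_eq, Real.norm_eq_abs]
  gcongr with i
  · exact hu i
  · exact huv i

lemma norm_toLp_two_le_sum_abs (v : ι → ℝ) : ‖toLp 2 v‖ ≤ ∑ i, |v i| := by
  rw [EuclideanSpace.norm_eq, Real.sqrt_le_iff]
  refine ⟨by positivity, ?_⟩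
  simpa only [PiLp.toLp_apply, Real.norm_eq_abs] using
    Finset.sum_sq_le_sq_sum_of_nonneg (s := Finset.univ) fun i _ => abs_nonneg (v i)

lemma norm_toLp_two_mulVec_le {𝕜 m : Type*} [RCLike 𝕜] [Fintype m] (A : Matrix m ι 𝕜)
    (v : ι → 𝕜) : ‖toLp 2 (A *ᵥ v)‖ ≤ ‖A‖ * ‖toLp 2 v‖ := by
  simpa only [← replicateCol_mulVec, frobenius_norm_replicateCol] using
    frobenius_norm_mul A (replicateCol Unit v)

end Norms

lemma Matrix.mulVec_mono_of_nonneg {R m n : Type*} [Semiring R] [PartialOrder R]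
    [IsOrderedRing R] [Fintype n] {A : Matrix m n R} (hA : ∀ i j, 0 ≤ A i j) {u v : n → R}
    (huv : u ≤ v) : A *ᵥ u ≤ A *ᵥ v := fun i =>
  Finset.sum_le_sum fun j _ => mul_le_mul_of_nonneg_left (huv j) (hA i j)

lemma euclNorm2_eq_norm (y : Fin 2 → ℝ) : euclNorm2 y = ‖toLp 2 y‖ := rfl

lemma frobNorm2_eq_norm (M : Matrix (Fin 2) (Fin 2) ℝ) : frobNorm2 M = ‖M‖ := by
  simp only [frobNorm2, frobenius_norm_def, Real.sqrt_eq_rpow, Real.rpow_two,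
    Real.norm_eq_abs, sq_abs]

lemma euclNorm2_nonneg (y : Fin 2 → ℝ) : 0 ≤ euclNorm2 y := norm_nonneg _

lemma frobNorm2_nonneg (M : Matrix (Fin 2) (Fin 2) ℝ) : 0 ≤ frobNorm2 M := Real.sqrt_nonneg _

lemma sq_abs_add_sqrt_le (g w : ℝ) : (|g| + √(g ^ 2 + w ^ 2)) ^ 2 ≤ 4 * g ^ 2 + 2 * w ^ 2 := by
  have hs : √(g ^ 2 + w ^ 2) ^ 2 = g ^ 2 + w ^ 2 := Real.sq_sqrt (by positivity)
  nlinarith [sq_nonneg (|g| - √(g ^ 2 + w ^ 2)), sq_abs g]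

lemma sq_sub_mul_sqrt_le (g w : ℝ) {x : ℝ} (hx : 0 ≤ x) :
    (w - g * √x) ^ 2 ≤
      (g ^ 2 + w ^ 2 * if g * w < 0 then 1 else 0) * x + (|g| + √(g ^ 2 + w ^ 2)) ^ 2 := by
  have hexp : (w - g * √x) ^ 2 = w ^ 2 - 2 * g * w * √x + g ^ 2 * x := by
    rw [sub_sq, mul_pow, Real.sq_sqrt hx]; ring
  have hf : g ^ 2 + w ^ 2 ≤ (|g| + √(g ^ 2 + w ^ 2)) ^ 2 := by
    have hs : √(g ^ 2 + w ^ 2) ^ 2 = g ^ 2 + w ^ 2 := Real.sq_sqrt (by positivity)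
    nlinarith [sq_abs g, abs_nonneg g, Real.sqrt_nonneg (g ^ 2 + w ^ 2)]
  split_ifs with hgw
  · -- AM-GM on the cross term: `2 |g w| √x ≤ g² + w² x`
    have hcross : -(2 * g * w * √x) ≤ g ^ 2 + w ^ 2 * x := by
      nlinarith [sq_nonneg (g + w * √x), Real.sq_sqrt hx]
    nlinarith
  · nlinarith [mul_nonneg (not_lt.mp hgw) (Real.sqrt_nonneg x)]

noncomputable def garchDiag (γ w : Fin 2 → ℝ) : Fin 2 → ℝ :=
  fun j => γ j ^ 2 + w j ^ 2 * if γ j * w j < 0 then 1 else 0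

lemma measurable_garchDiag (γ : Fin 2 → ℝ) : Measurable (garchDiag γ) :=
  measurable_pi_lambda _ fun j => measurable_const.add (((measurable_pi_apply j).pow_const 2).mul
    (Measurable.ite (measurableSet_lt (measurable_const.mul (measurable_pi_apply j))
      measurable_const) measurable_const measurable_const))

lemma garchB_add_garchb (β α : Matrix (Fin 2) (Fin 2) ℝ) (γ w : Fin 2 → ℝ) :
    garchB β α γ + garchb α γ w = β + α * diagonal (garchDiag γ w) := by
  ext i j
  rw [Matrix.add_apply, Matrix.add_apply, mul_diagonal, garchDiag]
  fin_cases i <;> fin_cases j <;>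
    simp only [garchB, garchb, of_apply, cons_val', cons_val_zero, cons_val_one,
      cons_val_fin_one, Fin.zero_eta, Fin.mk_one, Fin.isValue] <;> ring

lemma garchB_add_garchb_mulVec (β α : Matrix (Fin 2) (Fin 2) ℝ) (γ w x : Fin 2 → ℝ) :
    (garchB β α γ + garchb α γ w) *ᵥ x = β *ᵥ x + α *ᵥ (garchDiag γ w * x) := by
  rw [garchB_add_garchb, add_mulVec, ← mulVec_mulVec]
  congr 2
  ext j
  exact mulVec_diagonal _ _ _

lemma garch_innovation_sq_le (γ w : Fin 2 → ℝ) {x : Fin 2 → ℝ} (hx : 0 ≤ x) :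
    ![(w 0 - γ 0 * √(x 0)) ^ 2, (w 1 - γ 1 * √(x 1)) ^ 2] ≤ garchDiag γ w * x + garchf γ w := by
  intro j
  fin_cases j
  · exact sq_sub_mul_sqrt_le (γ 0) (w 0) (hx 0)
  · exact sq_sub_mul_sqrt_le (γ 1) (w 1) (hx 1)

lemma euclNorm2_garchF_le {ω γ : Fin 2 → ℝ} {β α : Matrix (Fin 2) (Fin 2) ℝ}
    (hβ : ∀ i j, 0 ≤ β i j) (hα : ∀ i j, 0 ≤ α i j) {x : Fin 2 → ℝ} (hx : 0 ≤ x)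
    (w : Fin 2 → ℝ) :
    euclNorm2 (garchF ω β α γ x w) ≤
      frobNorm2 (garchB β α γ + garchb α γ w) * euclNorm2 x
        + (euclNorm2 ω + euclNorm2 (α *ᵥ garchf γ w)) := by
  set v : Fin 2 → ℝ := ![(w 0 - γ 0 * √(x 0)) ^ 2, (w 1 - γ 1 * √(x 1)) ^ 2]
  have hv : 0 ≤ v := fun j => by fin_cases j <;> exact sq_nonneg _
  have hpos : 0 ≤ β *ᵥ x + α *ᵥ v := by
    simpa using add_le_add (β.mulVec_mono_of_nonneg hβ hx) (α.mulVec_mono_of_nonneg hα hv)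
  have hdom : β *ᵥ x + α *ᵥ v ≤ (garchB β α γ + garchb α γ w) *ᵥ x + α *ᵥ garchf γ w := by
    rw [garchB_add_garchb_mulVec, add_assoc, ← mulVec_add]
    exact add_le_add_right (α.mulVec_mono_of_nonneg hα (garch_innovation_sq_le γ w hx)) _
  simp only [euclNorm2_eq_norm, frobNorm2_eq_norm]
  calc ‖toLp 2 (garchF ω β α γ x w)‖
      ≤ ‖toLp 2 ω‖ + ‖toLp 2 (β *ᵥ x + α *ᵥ v)‖ := by
        rw [garchF, add_assoc, toLp_add]; exact norm_add_le _ _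
    _ ≤ ‖toLp 2 ω‖ + ‖toLp 2 ((garchB β α γ + garchb α γ w) *ᵥ x + α *ᵥ garchf γ w)‖ := by
        gcongr 1; exact norm_toLp_two_le_of_nonneg_of_le hpos hdom
    _ ≤ ‖toLp 2 ω‖ + (‖garchB β α γ + garchb α γ w‖ * ‖toLp 2 x‖
          + ‖toLp 2 (α *ᵥ garchf γ w)‖) := by
        rw [toLp_add]
        gcongr
        exact (norm_add_le _ _).trans (add_le_add_left (norm_toLp_two_mulVec_le _ _) _)
    _ = _ := by ring

lemma euclNorm2_mulVec_garchf_le (α : Matrix (Fin 2) (Fin 2) ℝ) (γ w : Fin 2 → ℝ) :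
    euclNorm2 (α *ᵥ garchf γ w) ≤ frobNorm2 α * (4 * ∑ i, γ i ^ 2 + 2 * ∑ i, w i ^ 2) := by
  have hf : ∑ i, |garchf γ w i| ≤ 4 * ∑ i, γ i ^ 2 + 2 * ∑ i, w i ^ 2 := by
    simp only [garchf, Fin.sum_univ_two, cons_val_zero, cons_val_one, abs_sq]
    linarith [sq_abs_add_sqrt_le (γ 0) (w 0), sq_abs_add_sqrt_le (γ 1) (w 1)]
  rw [euclNorm2_eq_norm, frobNorm2_eq_norm]
  exact (norm_toLp_two_mulVec_le α _).trans
    (mul_le_mul_of_nonneg_left ((norm_toLp_two_le_sum_abs _).trans hf) (norm_nonneg α))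

lemma frobNorm2_garchB_add_garchb_le (β α : Matrix (Fin 2) (Fin 2) ℝ) (γ w : Fin 2 → ℝ) :
    frobNorm2 (garchB β α γ + garchb α γ w) ≤
      frobNorm2 β + frobNorm2 α * (∑ i, γ i ^ 2 + ∑ i, w i ^ 2) := by
  have hd : ∑ i, |garchDiag γ w i| ≤ ∑ i, γ i ^ 2 + ∑ i, w i ^ 2 := by
    rw [← Finset.sum_add_distrib]
    refine Finset.sum_le_sum fun i _ => ?_
    simp only [garchDiag]
    split_ifs
    · rw [mul_one, abs_of_nonneg (by positivity)]
    · rw [mul_zero, add_zero, abs_of_nonneg (by positivity)]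
      exact le_add_of_nonneg_right (sq_nonneg _)
  simp only [frobNorm2_eq_norm, garchB_add_garchb]
  calc ‖β + α * diagonal (garchDiag γ w)‖
      ≤ ‖β‖ + ‖α‖ * ‖toLp 2 (garchDiag γ w)‖ := by
        rw [← frobenius_norm_diagonal]
        exact (norm_add_le _ _).trans (add_le_add_right (frobenius_norm_mul _ _) _)
    _ ≤ _ := by
        gcongr
        exact (norm_toLp_two_le_sum_abs _).trans hd

section Integrability

variable {Ω : Type*} [MeasurableSpace Ω] {μ : Measure Ω} [IsFiniteMeasure μ]
  {W : Ω → Fin 2 → ℝ}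

lemma integrable_euclNorm2_mulVec_garchf (α : Matrix (Fin 2) (Fin 2) ℝ) (γ : Fin 2 → ℝ)
    (hW : AEMeasurable W μ) (hW2 : ∀ i, Integrable (fun ω => W ω i ^ 2) μ) :
    Integrable (fun ω => euclNorm2 (α *ᵥ garchf γ (W ω))) μ := by
  have hcont : Continuous fun w => euclNorm2 (α *ᵥ garchf γ w) :=
    (PiLp.continuous_toLp 2 _).norm.comp (Continuous.matrix_mulVec continuous_const
      (by unfold garchf; fun_prop))
  have hdom : Integrable (fun ω => frobNorm2 α * (4 * ∑ i, γ i ^ 2 + 2 * ∑ i, W ω i ^ 2)) μ :=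
    ((integrable_const _).add
      ((integrable_finsetSum _ fun i _ => hW2 i).const_mul 2)).const_mul _
  refine hdom.mono' (hcont.measurable.comp_aemeasurable hW).aestronglyMeasurable
    (ae_of_all _ fun ω => ?_)
  rw [Real.norm_of_nonneg (euclNorm2_nonneg _)]
  exact euclNorm2_mulVec_garchf_le α γ (W ω)

lemma integrable_frobNorm2_garchB_add_garchb (β α : Matrix (Fin 2) (Fin 2) ℝ) (γ : Fin 2 → ℝ)
    (hW : AEMeasurable W μ) (hW2 : ∀ i, Integrable (fun ω => W ω i ^ 2) μ) :
    Integrable (fun ω => frobNorm2 (garchB β α γ + garchb α γ (W ω))) μ := by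
  have hcont : Continuous fun d => frobNorm2 (β + α * diagonal d) := by
    unfold frobNorm2
    simp only [Matrix.add_apply, mul_diagonal]
    fun_prop
  have hdom : Integrable (fun ω => frobNorm2 β + frobNorm2 α * (∑ i, γ i ^ 2 + ∑ i, W ω i ^ 2)) μ :=
    (integrable_const _).add
      (((integrable_const _).add (integrable_finsetSum _ fun i _ => hW2 i)).const_mul _)
  have hmeas : Measurable fun w => frobNorm2 (garchB β α γ + garchb α γ w) := by
    simp only [garchB_add_garchb]
    exact hcont.measurable.comp (measurable_garchDiag γ)
  refine hdom.mono' (hmeas.comp_aemeasurable hW).aestronglyMeasurable (ae_of_all _ fun ω => ?_)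
  rw [Real.norm_of_nonneg (frobNorm2_nonneg _)]
  exact frobNorm2_garchB_add_garchb_le β α γ (W ω)

end Integrability

theorem garch2f_drift_inequality_general
    {Ω : Type*} [MeasurableSpace Ω] (μ : Measure Ω) [IsProbabilityMeasure μ]
    (W₁ W₂ : Ω → ℝ)
    (hlaw₁ : μ.map W₁ = gaussianReal 0 1) (hlaw₂ : μ.map W₂ = gaussianReal 0 1)
    (ω γ : Fin 2 → ℝ) (β α : Matrix (Fin 2) (Fin 2) ℝ)
    (hβ : ∀ i j, 0 ≤ β i j) (hα : ∀ i j, 0 ≤ α i j) :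
    Integrable (fun ωp => euclNorm2 (α.mulVec (garchf γ ![W₁ ωp, W₂ ωp]))) μ ∧
    Integrable (fun ωp => frobNorm2 (garchB β α γ + garchb α γ ![W₁ ωp, W₂ ωp])) μ ∧
    ∀ x : Fin 2 → ℝ, (∀ i, 0 ≤ x i) →
      (∫ ωp, euclNorm2 (garchF ω β α γ x ![W₁ ωp, W₂ ωp]) ∂μ) ≤
        (∫ ωp, frobNorm2 (garchB β α γ + garchb α γ ![W₁ ωp, W₂ ωp]) ∂μ) * euclNorm2 x
          + (euclNorm2 ω + ∫ ωp, euclNorm2 (α.mulVec (garchf γ ![W₁ ωp, W₂ ωp])) ∂μ) := by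
  have hG₁ : HasGaussianLaw W₁ μ := ⟨by rw [hlaw₁]; infer_instance⟩
  have hG₂ : HasGaussianLaw W₂ μ := ⟨by rw [hlaw₂]; infer_instance⟩
  have hW : AEMeasurable (fun ωp => ![W₁ ωp, W₂ ωp]) μ := by
    refine aemeasurable_pi_lambda _ fun i => ?_
    fin_cases i
    exacts [hG₁.aemeasurable, hG₂.aemeasurable]
  have hW2 : ∀ i, Integrable (fun ωp => ![W₁ ωp, W₂ ωp] i ^ 2) μ := fun i => by
    fin_cases i
    exacts [hG₁.memLp_two.integrable_sq, hG₂.memLp_two.integrable_sq]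
  have hIf := integrable_euclNorm2_mulVec_garchf α γ hW hW2
  have hIb := integrable_frobNorm2_garchB_add_garchb β α γ hW hW2
  refine ⟨hIf, hIb, fun x hx => ?_⟩
  have hc : Integrable (fun ωp => euclNorm2 ω + euclNorm2 (α *ᵥ garchf γ ![W₁ ωp, W₂ ωp])) μ :=
    (integrable_const _).add hIf
  calc ∫ ωp, euclNorm2 (garchF ω β α γ x ![W₁ ωp, W₂ ωp]) ∂μ
      ≤ ∫ ωp, (frobNorm2 (garchB β α γ + garchb α γ ![W₁ ωp, W₂ ωp]) * euclNorm2 x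
          + (euclNorm2 ω + euclNorm2 (α *ᵥ garchf γ ![W₁ ωp, W₂ ωp]))) ∂μ :=
        integral_mono_of_nonneg (ae_of_all _ fun _ => euclNorm2_nonneg _)
          ((hIb.mul_const _).add hc)
          (ae_of_all _ fun _ => euclNorm2_garchF_le hβ hα hx _)
    _ = _ := by
        rw [integral_add (hIb.mul_const _) hc, integral_add (integrable_const _) hIf,
          integral_mul_const, integral_const, probReal_univ, one_smul]

/-- drift inequality from the proof of Theorem 1: under Assumption 1, with
`W₁, W₂` independent standard normals, `E‖α·f(W)‖₂ < ∞`, `E‖B + b(W)‖ < ∞` (Frobenius norm),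
and for every entrywise nonnegative `x`, `E‖F(x,W)‖₂ ≤ φ‖x‖₂ + c` with
`φ = E‖B + b(W)‖` and `c = ‖ω‖₂ + E‖α·f(W)‖₂`. -/
theorem garch2f_drift_inequality
    {Ω : Type*} [MeasurableSpace Ω] (μ : Measure Ω) [IsProbabilityMeasure μ]
    (W₁ W₂ : Ω → ℝ) (hW₁ : Measurable W₁) (hW₂ : Measurable W₂)
    (hlaw₁ : μ.map W₁ = gaussianReal 0 1) (hlaw₂ : μ.map W₂ = gaussianReal 0 1)
    (hindep : IndepFun W₁ W₂ μ)
    (ω γ : Fin 2 → ℝ) (β α : Matrix (Fin 2) (Fin 2) ℝ)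
    (hω : ∀ i, 0 < ω i) (hβ : ∀ i j, 0 ≤ β i j) (hα : ∀ i j, 0 ≤ α i j)
    (hα1 : 0 < α 0 0 + α 0 1) (hα2 : 0 < α 1 0 + α 1 1)
    (hβ1 : 0 < β 0 0 + β 0 1) (hβ2 : 0 < β 1 0 + β 1 1) :
    Integrable (fun ωp => euclNorm2 (α.mulVec (garchf γ ![W₁ ωp, W₂ ωp]))) μ ∧
    Integrable (fun ωp => frobNorm2 (garchB β α γ + garchb α γ ![W₁ ωp, W₂ ωp])) μ ∧
    ∀ x : Fin 2 → ℝ, (∀ i, 0 ≤ x i) →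
      (∫ ωp, euclNorm2 (garchF ω β α γ x ![W₁ ωp, W₂ ωp]) ∂μ) ≤
        (∫ ωp, frobNorm2 (garchB β α γ + garchb α γ ![W₁ ωp, W₂ ωp]) ∂μ) * euclNorm2 x
          + (euclNorm2 ω + ∫ ωp, euclNorm2 (α.mulVec (garchf γ ![W₁ ωp, W₂ ωp])) ∂μ) :=
  garch2f_drift_inequality_general μ W₁ W₂ hlaw₁ hlaw₂ ω γ β α hβ hα
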